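/- Fix α ∈ Λ. If C is a bounded linear operator on H_α satisfying C S_j = S_j C and C S_j* = S_j* C for all j = 1,…,d, then C = λ I for some λ ∈ ℂ; that is, the representation π_α is irreducible. -/

import Mathlib

open scoped BigOperators InnerProductSpace

namespace QCstar

variable {d : ℕ}

/-- `q(j,α)`: product of `q j a` over the prefix of `α` preceding the first
occurrence of `j` (the whole list if `j` does not occur in `α`). -/
def qOne (q : Fin d → Fin d → ℂ) (j : Fin d) (α : List (Fin d)) : ℂ :=
  ((α.takeWhile fun a => a ≠ j).map (q j)).prod

/-- `q(α,β)` for finite multiindices, defined by recursion on `α`. -/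
def qMul (q : Fin d → Fin d → ℂ) : List (Fin d) → List (Fin d) → ℂ
  | [], _ => 1
  | a :: α, β => qOne q a β * qMul q α (β.erase a)

/-- `s_α = s_{α₁} ⋯ s_{α_m}`. -/
def sWord {A : Type*} [Monoid A] (s : Fin d → A) (α : List (Fin d)) : A :=
  (α.map s).prod

/-- The shift on infinite multiindices. -/
def shift (β : ℕ → Fin d) : ℕ → Fin d := fun n => β (n + 1)

/-- The finite multiindex `(β₁,…,β_m)`. -/
def prefixList (β : ℕ → Fin d) (m : ℕ) : List (Fin d) :=
  List.ofFn fun i : Fin m => β i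

/-- `β ∼ α`: the tails agree up to a shift. -/
def equivTail (β α : ℕ → Fin d) : Prop := ∃ m n, shift^[m] β = shift^[n] α

/-- `q(α,β)` for infinite multiindices: the limit of `q` of the prefixes. -/
noncomputable def qInf (q : Fin d → Fin d → ℂ) (α β : ℕ → Fin d) : ℂ :=
  Filter.limUnder Filter.atTop fun m => qMul q (prefixList α m) (prefixList β m)

/-- `(j, β₁, β₂, …)`. -/
def consSeq (j : Fin d) (β : ℕ → Fin d) : ℕ → Fin d
  | 0 => j
  | n + 1 => β n

open Classical in
/-- `β ∖ j` for an infinite multiindex: remove the first occurrence of `j`. -/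
noncomputable def eraseInf (j : Fin d) (β : ℕ → Fin d) : ℕ → Fin d :=
  if h : ∃ n, β n = j then fun k => if k < Nat.find h then β k else β (k + 1) else β

open Classical in
/-- `q(j,β)` for an infinite multiindex containing `j`. -/
noncomputable def qOneInf (q : Fin d → Fin d → ℂ) (j : Fin d) (β : ℕ → Fin d) : ℂ :=
  if h : ∃ n, β n = j then ∏ k ∈ Finset.range (Nat.find h), q j (β k) else 0

/-- Entries of the Fock form. -/
noncomputable def fockEntry (q : Fin d → Fin d → ℂ) (α β : List (Fin d)) : ℂ :=
  if β.Perm α then qMul q β α else 0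

/-- The Fock sesquilinear form on the free complex vector space with basis the
finite multiindices (conjugate-linear in the first argument). -/
noncomputable def fockForm (q : Fin d → Fin d → ℂ) (x y : List (Fin d) →₀ ℂ) : ℂ :=
  ∑ α ∈ x.support, ∑ β ∈ y.support, (starRingEnd ℂ) (x α) * y β * fockEntry q α β

variable {H : Type*} [NormedAddCommGroup H] [InnerProductSpace ℂ H] [CompleteSpace H]

/-- `(H, e)` is a realization of the Hilbert space `H_α`: the vectors `e β`, `β ∼ α`,
have the prescribed inner products and their span is dense. -/
def IsRepSpace (q : Fin d → Fin d → ℂ) (α : ℕ → Fin d) (e : (ℕ → Fin d) → H) : Prop :=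
  (∀ β γ : ℕ → Fin d, equivTail β α → equivTail γ α → ⟪e β, e γ⟫_ℂ = qInf q γ β) ∧
  (Submodule.span ℂ (e '' {β | equivTail β α})).topologicalClosure = ⊤

/-- The operators `S j` act on the basis vectors of `H_α` as prescribed:
`S j e_β = e_{(j,β)}`, and the adjoint kills `e_β` if `j` does not occur in `β` and
sends `e_β` to `q(j,β) e_{β∖j}` otherwise. -/
def IsRepOps (q : Fin d → Fin d → ℂ) (α : ℕ → Fin d) (e : (ℕ → Fin d) → H)
    (S : Fin d → H →L[ℂ] H) : Prop :=
  (∀ (j : Fin d) (β : ℕ → Fin d), equivTail β α → S j (e β) = e (consSeq j β)) ∧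
  (∀ (j : Fin d) (β : ℕ → Fin d), equivTail β α → (¬∃ n, β n = j) →
    ContinuousLinearMap.adjoint (S j) (e β) = 0) ∧
  (∀ (j : Fin d) (β : ℕ → Fin d), equivTail β α → (∃ n, β n = j) →
    ContinuousLinearMap.adjoint (S j) (e β) = qOneInf q j β • e (eraseInf j β))

/-!
Write `W_n = S_{β₀} ⋯ S_{β_{n-1}}` for the words read off a multiindex `β ∼ α`. The vector
`W_n^* e_γ` is `e_δ`, where `δ` is `γ` with the letters `β₀, …, β_{n-1}` successively erased,
times the product `c_n` of the `q`-factors collected on the way. Either infinitely many of these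
erasures remove a letter other than the head, and then `|c_n| ≤ ρ^k` for every `k`, where
`ρ = max_{i ≠ j} |q_ij| < 1`; or from some point on they only strip the head, and then `δ` is
eventually the tail of `β`. In both cases `W_n W_n^* e_γ → ⟨e_β, e_γ⟩ e_β`. An operator `T`
commuting with all `S_j` and `S_j^*` commutes with `W_n W_n^*`, so
`⟨e_β, T e_γ⟩ = ⟨e_β, e_γ⟩ ⟨e_β, T e_β⟩`. Applied to `C^*` this makes `e_α` an eigenvector of
`C`, and since every `e_γ` equals `W W'^* e_α` for suitable words, `C` acts on the total family
`(e_γ)` by that eigenvalue.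
-/

open Filter Topology ContinuousLinearMap

section Multiindices

variable {d : ℕ}

lemma shift_iterate_apply (n : ℕ) (β : ℕ → Fin d) (k : ℕ) : shift^[n] β k = β (k + n) := by
  induction n generalizing β with
  | zero => rfl
  | succ n ih => rw [Function.iterate_succ_apply, ih]; rfl

lemma consSeq_head_shift (β : ℕ → Fin d) : consSeq (β 0) (shift β) = β :=
  funext fun n => by cases n <;> rfl

lemma shift_iterate_eraseInf {j : Fin d} {β : ℕ → Fin d} {n : ℕ} (hn : β n = j) :
    shift^[n] (eraseInf j β) = shift^[n + 1] β := by
  classical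
  have hex : ∃ n, β n = j := ⟨n, hn⟩
  funext k
  rw [shift_iterate_apply, shift_iterate_apply, eraseInf, dif_pos hex,
    if_neg (Nat.not_lt.mpr ((Nat.find_le hn).trans (Nat.le_add_left n k)))]
  rfl

lemma eraseInf_of_head {j : Fin d} {β : ℕ → Fin d} (h0 : β 0 = j) : eraseInf j β = shift β :=
  shift_iterate_eraseInf h0

lemma equivTail_refl (α : ℕ → Fin d) : equivTail α α := ⟨0, 0, rfl⟩

lemma equivTail.iterate {β α : ℕ → Fin d} (h : equivTail β α) (n : ℕ) :
    equivTail (shift^[n] β) α := by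
  obtain ⟨m, k, h⟩ := h
  exact ⟨m, n + k, by
    rw [← Function.iterate_add_apply, Nat.add_comm, Function.iterate_add_apply, h,
      ← Function.iterate_add_apply]⟩

lemma equivTail.cons {β α : ℕ → Fin d} (h : equivTail β α) (j : Fin d) :
    equivTail (consSeq j β) α := by
  obtain ⟨m, n, h⟩ := h
  exact ⟨m + 1, n, h⟩

lemma equivTail.foldr_cons {β α : ℕ → Fin d} (h : equivTail β α) (w : List (Fin d)) :
    equivTail (w.foldr consSeq β) α := by
  induction w with
  | nil => exact h
  | cons a w ih => exact ih.cons a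

lemma equivTail.erase {β α : ℕ → Fin d} (h : equivTail β α) (j : Fin d) :
    equivTail (eraseInf j β) α := by
  classical
  by_cases hex : ∃ n, β n = j
  · obtain ⟨n, hn⟩ := hex
    obtain ⟨m, k, hmk⟩ := h.iterate (n + 1)
    exact ⟨m + n, k, by rw [Function.iterate_add_apply, shift_iterate_eraseInf hn, hmk]⟩
  · rwa [eraseInf, dif_neg hex]

lemma prefixList_succ (β : ℕ → Fin d) (n : ℕ) :
    prefixList β (n + 1) = β 0 :: prefixList (shift β) n := by
  rw [prefixList, List.ofFn_succ]
  rfl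

lemma prefixList_succ' (β : ℕ → Fin d) (n : ℕ) :
    prefixList β (n + 1) = prefixList β n ++ [β n] := by
  rw [prefixList, List.ofFn_succ', List.concat_eq_append]
  rfl

lemma foldr_consSeq_prefixList (n : ℕ) (β : ℕ → Fin d) :
    (prefixList β n).foldr consSeq (shift^[n] β) = β := by
  induction n generalizing β with
  | zero => rfl
  | succ n ih =>
    rw [prefixList_succ, List.foldr_cons, Function.iterate_succ_apply, ih, consSeq_head_shift]

end Multiindices

section Coefficients

variable {d : ℕ}

lemma exists_lt_one_norm_offDiag_le {ι : Type*} [Fintype ι] {q : ι → ι → ℂ}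
    (hlt : ∀ i j, i ≠ j → ‖q i j‖ < 1) :
    ∃ ρ : ℝ, 0 ≤ ρ ∧ ρ < 1 ∧ ∀ i j, i ≠ j → ‖q i j‖ ≤ ρ := by
  classical
  let ρ : NNReal := Finset.univ.offDiag.sup fun p => ‖q p.1 p.2‖₊
  refine ⟨ρ, ρ.2, NNReal.coe_lt_one.mpr ((Finset.sup_lt_iff zero_lt_one).mpr fun p hp => ?_),
    fun i j hij => ?_⟩
  · exact hlt p.1 p.2 (Finset.mem_offDiag.mp hp).2.2
  · exact Finset.le_sup (f := fun p : ι × ι => ‖q p.1 p.2‖₊) (b := (i, j))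
      (Finset.mem_offDiag.mpr ⟨Finset.mem_univ i, Finset.mem_univ j, hij⟩)

lemma qOneInf_of_head (q : Fin d → Fin d → ℂ) {j : Fin d} {β : ℕ → Fin d} (h0 : β 0 = j) :
    qOneInf q j β = 1 := by
  classical
  have hex : ∃ n, β n = j := ⟨0, h0⟩
  rw [qOneInf, dif_pos hex, Nat.le_zero.mp (Nat.find_le h0), Finset.prod_range_zero]

lemma norm_qOneInf_le_of_head_ne {q : Fin d → Fin d → ℂ} {ρ : ℝ} (hρ0 : 0 ≤ ρ) (hρ1 : ρ ≤ 1)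
    (hq : ∀ i j, i ≠ j → ‖q i j‖ ≤ ρ) {j : Fin d} {β : ℕ → Fin d} (h0 : β 0 ≠ j) :
    ‖qOneInf q j β‖ ≤ ρ := by
  classical
  rw [qOneInf]
  split_ifs with hex
  · obtain ⟨m, hm⟩ := Nat.exists_eq_succ_of_ne_zero fun h => h0 (h ▸ Nat.find_spec hex)
    rw [hm, Finset.prod_range_succ', norm_mul, norm_prod]
    have htail : ∏ k ∈ Finset.range m, ‖q j (β (k + 1))‖ ≤ 1 :=
      Finset.prod_le_one (fun _ _ => norm_nonneg _) fun k hk =>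
        (hq _ _ (Ne.symm (Nat.find_min hex (by rw [hm]; simpa using hk)))).trans hρ1
    simpa using mul_le_mul htail (hq _ _ (Ne.symm h0)) (norm_nonneg _) zero_le_one
  · simpa using hρ0

lemma norm_qOneInf_le_one {q : Fin d → Fin d → ℂ} (hq : ∀ i j, i ≠ j → ‖q i j‖ ≤ 1)
    (j : Fin d) (β : ℕ → Fin d) : ‖qOneInf q j β‖ ≤ 1 := by
  by_cases h0 : β 0 = j
  · rw [qOneInf_of_head q h0, norm_one]
  · exact norm_qOneInf_le_of_head_ne zero_le_one le_rfl hq h0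

lemma qMul_self (q : Fin d → Fin d → ℂ) (l : List (Fin d)) : qMul q l l = 1 := by
  induction l with
  | nil => rfl
  | cons a l ih => simp [qMul, qOne, ih]

lemma qInf_self (q : Fin d → Fin d → ℂ) (β : ℕ → Fin d) : qInf q β β = 1 := by
  simp only [qInf, qMul_self]
  exact tendsto_const_nhds.limUnder_eq

end Coefficients

section Erasure

variable {d : ℕ}

noncomputable def erasePrefix (β γ : ℕ → Fin d) : ℕ → ℕ → Fin d
  | 0 => γ
  | n + 1 => eraseInf (β n) (erasePrefix β γ n)

noncomputable def erasePrefixCoeff (q : Fin d → Fin d → ℂ) (β γ : ℕ → Fin d) (n : ℕ) : ℂ :=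
  ∏ m ∈ Finset.range n, qOneInf q (β m) (erasePrefix β γ m)

variable {q : Fin d → Fin d → ℂ} {β γ : ℕ → Fin d}

lemma erasePrefixCoeff_succ (n : ℕ) :
    erasePrefixCoeff q β γ (n + 1) =
      erasePrefixCoeff q β γ n * qOneInf q (β n) (erasePrefix β γ n) :=
  Finset.prod_range_succ _ n

lemma equivTail.erasePrefix {α : ℕ → Fin d} (h : equivTail γ α) (β : ℕ → Fin d) (n : ℕ) :
    equivTail (erasePrefix β γ n) α := by
  induction n with
  | zero => exact h
  | succ n ih => exact ih.erase _

lemma erasePrefix_self (n : ℕ) : erasePrefix β β n = shift^[n] β := by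
  induction n with
  | zero => rfl
  | succ n ih =>
    rw [erasePrefix, ih, eraseInf_of_head (by rw [shift_iterate_apply, zero_add]),
      Function.iterate_succ_apply']

lemma erasePrefixCoeff_self (n : ℕ) : erasePrefixCoeff q β β n = 1 :=
  Finset.prod_eq_one fun m _ =>
    qOneInf_of_head q (by rw [erasePrefix_self, shift_iterate_apply, zero_add])

lemma antitone_norm_erasePrefixCoeff (hq : ∀ i j, i ≠ j → ‖q i j‖ ≤ 1) :
    Antitone fun n => ‖erasePrefixCoeff q β γ n‖ :=
  antitone_nat_of_succ_le fun n => by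
    rw [erasePrefixCoeff_succ, norm_mul]
    exact mul_le_of_le_one_right (norm_nonneg _) (norm_qOneInf_le_one hq _ _)

lemma tendsto_norm_erasePrefixCoeff_zero (hlt : ∀ i j, i ≠ j → ‖q i j‖ < 1)
    (h : ∀ N, ∃ n ≥ N, erasePrefix β γ n 0 ≠ β n) :
    Tendsto (fun n => ‖erasePrefixCoeff q β γ n‖) atTop (𝓝 0) := by
  obtain ⟨ρ, hρ0, hρ1, hρ⟩ := exists_lt_one_norm_offDiag_le hlt
  have hanti := antitone_norm_erasePrefixCoeff (β := β) (γ := γ) fun i j hij => (hlt i j hij).le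
  have hpow : ∀ k : ℕ, ∃ n, ‖erasePrefixCoeff q β γ n‖ ≤ ρ ^ k := by
    intro k
    induction k with
    | zero => exact ⟨0, by simp [erasePrefixCoeff]⟩
    | succ k ih =>
      obtain ⟨n, hn⟩ := ih
      obtain ⟨m, hm, hm0⟩ := h n
      refine ⟨m + 1, ?_⟩
      rw [erasePrefixCoeff_succ, norm_mul, pow_succ]
      exact mul_le_mul ((hanti hm).trans hn) (norm_qOneInf_le_of_head_ne hρ0 hρ1.le hρ hm0)
        (norm_nonneg _) (pow_nonneg hρ0 k)
  refine Metric.tendsto_atTop.mpr fun ε hε => ?_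
  obtain ⟨k, hk⟩ := exists_pow_lt_of_lt_one hε hρ1
  obtain ⟨N, hN⟩ := hpow k
  exact ⟨N, fun n hn => by
    rw [Real.dist_eq, sub_zero, abs_norm]
    exact ((hanti hn).trans hN).trans_lt hk⟩

lemma erasePrefix_add_of_head {N : ℕ} (h : ∀ n ≥ N, erasePrefix β γ n 0 = β n) (k : ℕ) :
    erasePrefix β γ (N + k) = shift^[k] (erasePrefix β γ N) := by
  induction k with
  | zero => rfl
  | succ k ih =>
    rw [← Nat.add_assoc, erasePrefix, eraseInf_of_head (h _ (Nat.le_add_right N k)), ih,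
      Function.iterate_succ_apply']

lemma erasePrefix_eq_shift_of_head {N : ℕ} (h : ∀ n ≥ N, erasePrefix β γ n 0 = β n) {n : ℕ}
    (hn : N ≤ n) : erasePrefix β γ n = shift^[n] β := by
  have hN : erasePrefix β γ N = shift^[N] β := funext fun k => by
    rw [shift_iterate_apply, Nat.add_comm k N, ← h (N + k) (Nat.le_add_right N k),
      erasePrefix_add_of_head h k, shift_iterate_apply, zero_add]
  obtain ⟨k, rfl⟩ := Nat.exists_eq_add_of_le hn
  rw [erasePrefix_add_of_head h, hN, ← Function.iterate_add_apply, Nat.add_comm]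

lemma erasePrefixCoeff_eq_of_head {N : ℕ} (h : ∀ n ≥ N, erasePrefix β γ n 0 = β n) {n : ℕ}
    (hn : N ≤ n) :
    erasePrefixCoeff q β γ n = erasePrefixCoeff q β γ N := by
  induction n, hn using Nat.le_induction with
  | base => rfl
  | succ n hn ih => rw [erasePrefixCoeff_succ, qOneInf_of_head q (h n hn), mul_one, ih]

end Erasure

section Words

variable {d : ℕ} {A : Type*} [Monoid A]

lemma sWord_cons (s : Fin d → A) (j : Fin d) (w : List (Fin d)) :
    sWord s (j :: w) = s j * sWord s w :=
  List.prod_cons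

lemma sWord_prefixList_succ (s : Fin d → A) (β : ℕ → Fin d) (n : ℕ) :
    sWord s (prefixList β (n + 1)) = sWord s (prefixList β n) * s (β n) := by
  simp [sWord, prefixList_succ']

lemma commute_sWord {a : A} {s : Fin d → A} (h : ∀ j, Commute a (s j)) (w : List (Fin d)) :
    Commute a (sWord s w) :=
  Commute.list_prod_right _ _ (by simpa using fun j _ => h j)

lemma commute_star_sWord [StarMul A] {a : A} {s : Fin d → A} (h : ∀ j, Commute a (star (s j)))
    (w : List (Fin d)) : Commute a (star (sWord s w)) := by
  induction w with
  | nil => simp [sWord]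
  | cons j w ih => rw [sWord_cons, star_mul]; exact ih.mul_right (h j)

end Words

section RepresentationSpace

variable {d : ℕ} {q : Fin d → Fin d → ℂ} {α β : ℕ → Fin d}
  {E : Type*} [NormedAddCommGroup E] [InnerProductSpace ℂ E] {e : (ℕ → Fin d) → E}

lemma IsRepSpace.inner_self_eq_one (he : IsRepSpace q α e) (hβ : equivTail β α) :
    ⟪e β, e β⟫_ℂ = 1 := by
  rw [he.1 β β hβ hβ, qInf_self]

lemma IsRepSpace.norm_eq_one (he : IsRepSpace q α e) (hβ : equivTail β α) : ‖e β‖ = 1 := by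
  have h : ‖e β‖ ^ 2 = 1 := by
    rw [@norm_sq_eq_re_inner ℂ, he.inner_self_eq_one hβ, RCLike.one_re]
  exact (pow_eq_one_iff_of_nonneg (norm_nonneg _) two_ne_zero).mp h

lemma IsRepSpace.ext {F : Type*} [NormedAddCommGroup F] [NormedSpace ℂ F]
    (he : IsRepSpace q α e) {T T' : E →L[ℂ] F} (h : ∀ γ, equivTail γ α → T (e γ) = T' (e γ)) :
    T = T' := by
  refine ext_on (s := e '' {γ | equivTail γ α}) ?_ fun x hx => ?_
  · rw [dense_iff_closure_eq, ← Submodule.topologicalClosure_coe, he.2]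
    rfl
  · obtain ⟨γ, hγ, rfl⟩ := hx
    exact h γ hγ

lemma IsRepSpace.eq_zero_of_inner (he : IsRepSpace q α e) {v : E}
    (h : ∀ γ, equivTail γ α → ⟪v, e γ⟫_ℂ = 0) : v = 0 := by
  have hv : innerSL ℂ v = 0 := he.ext (by simpa using h)
  simpa using DFunLike.congr_fun hv v

end RepresentationSpace

section RepresentationOperators

variable {d : ℕ} {q : Fin d → Fin d → ℂ} {α β γ : ℕ → Fin d} {e : (ℕ → Fin d) → H}
  {S : Fin d → H →L[ℂ] H}

lemma IsRepOps.sWord_apply (hS : IsRepOps q α e S) (hβ : equivTail β α) (w : List (Fin d)) :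
    sWord S w (e β) = e (w.foldr consSeq β) := by
  induction w with
  | nil => rfl
  | cons j w ih =>
    rw [sWord_cons, mul_def, comp_apply, ih, hS.1 j _ (hβ.foldr_cons w)]
    rfl

lemma IsRepOps.sWord_prefixList_apply (hS : IsRepOps q α e S) (hβ : equivTail β α) (n : ℕ) :
    sWord S (prefixList β n) (e (shift^[n] β)) = e β := by
  rw [hS.sWord_apply (hβ.iterate n), foldr_consSeq_prefixList]

lemma IsRepOps.adjoint_sWord_prefixList_apply (hS : IsRepOps q α e S) (β : ℕ → Fin d)
    (hγ : equivTail γ α) (n : ℕ) :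
    adjoint (sWord S (prefixList β n)) (e γ) =
      erasePrefixCoeff q β γ n • e (erasePrefix β γ n) := by
  induction n with
  | zero =>
    rw [erasePrefixCoeff, Finset.prod_range_zero, one_smul]
    exact DFunLike.congr_fun adjoint_id (e γ)
  | succ n ih =>
    rw [sWord_prefixList_succ, mul_def, adjoint_comp, comp_apply, ih, map_smul,
      erasePrefixCoeff_succ, erasePrefix]
    by_cases hex : ∃ k, erasePrefix β γ n k = β n
    · rw [hS.2.2 _ _ (hγ.erasePrefix β n) hex, smul_smul]
    · rw [hS.2.1 _ _ (hγ.erasePrefix β n) hex, qOneInf, dif_neg hex, smul_zero, mul_zero,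
        zero_smul]

lemma IsRepOps.adjoint_sWord_prefixList_apply_self (hS : IsRepOps q α e S) (hβ : equivTail β α)
    (n : ℕ) : adjoint (sWord S (prefixList β n)) (e β) = e (shift^[n] β) := by
  rw [hS.adjoint_sWord_prefixList_apply β hβ n, erasePrefixCoeff_self, erasePrefix_self, one_smul]

lemma IsRepOps.exists_eq_sWord_adjoint_sWord (hS : IsRepOps q α e S) (hγ : equivTail γ α) :
    ∃ w w' : List (Fin d), e γ = sWord S w (adjoint (sWord S w') (e α)) := by
  obtain ⟨m, n, hmn⟩ := hγ
  refine ⟨prefixList γ m, prefixList α n, ?_⟩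
  rw [hS.adjoint_sWord_prefixList_apply_self (equivTail_refl α), ← hmn,
    hS.sWord_prefixList_apply ⟨m, n, hmn⟩]

lemma IsRepOps.inner_e_eq_erasePrefixCoeff_mul (hS : IsRepOps q α e S) (hβ : equivTail β α)
    (hγ : equivTail γ α) (n : ℕ) :
    ⟪e β, e γ⟫_ℂ = erasePrefixCoeff q β γ n * ⟪e (shift^[n] β), e (erasePrefix β γ n)⟫_ℂ := by
  rw [← inner_smul_right, ← hS.adjoint_sWord_prefixList_apply β hγ n, adjoint_inner_right,
    hS.sWord_prefixList_apply hβ]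

end RepresentationOperators

section Irreducibility

variable {d : ℕ} {q : Fin d → Fin d → ℂ} {α β γ : ℕ → Fin d} {e : (ℕ → Fin d) → H}
  {S : Fin d → H →L[ℂ] H}

theorem IsRepOps.tendsto_sWord_adjoint_apply (hlt : ∀ i j, i ≠ j → ‖q i j‖ < 1)
    (he : IsRepSpace q α e) (hS : IsRepOps q α e S) (hβ : equivTail β α) (hγ : equivTail γ α) :
    Tendsto (fun n => sWord S (prefixList β n) (adjoint (sWord S (prefixList β n)) (e γ)))
      atTop (𝓝 (⟪e β, e γ⟫_ℂ • e β)) := by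
  simp_rw [hS.adjoint_sWord_prefixList_apply β hγ, map_smul]
  by_cases hfreq : ∀ N, ∃ n ≥ N, erasePrefix β γ n 0 ≠ β n
  · have hc := tendsto_norm_erasePrefixCoeff_zero hlt hfreq
    have hinner : ⟪e β, e γ⟫_ℂ = 0 := by
      refine norm_le_zero_iff.mp (ge_of_tendsto' hc fun n => ?_)
      rw [hS.inner_e_eq_erasePrefixCoeff_mul hβ hγ n, norm_mul]
      refine mul_le_of_le_one_right (norm_nonneg _) ((norm_inner_le_norm _ _).trans ?_)
      rw [he.norm_eq_one (hβ.iterate n), he.norm_eq_one (hγ.erasePrefix β n), one_mul]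
    rw [hinner, zero_smul]
    refine squeeze_zero_norm (fun n => ?_) hc
    rw [norm_smul, hS.sWord_apply (hγ.erasePrefix β n),
      he.norm_eq_one ((hγ.erasePrefix β n).foldr_cons _), mul_one]
  · push Not at hfreq
    obtain ⟨N, hN⟩ := hfreq
    refine tendsto_atTop_of_eventually_const (i₀ := N) fun n hn => ?_
    rw [erasePrefix_eq_shift_of_head hN hn, hS.sWord_prefixList_apply hβ,
      hS.inner_e_eq_erasePrefixCoeff_mul hβ hγ N, erasePrefix_eq_shift_of_head hN le_rfl,
      he.inner_self_eq_one (hβ.iterate N), mul_one, erasePrefixCoeff_eq_of_head hN hn]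

theorem IsRepOps.inner_e_apply_eq_mul (hlt : ∀ i j, i ≠ j → ‖q i j‖ < 1)
    (he : IsRepSpace q α e) (hS : IsRepOps q α e S) {T : H →L[ℂ] H}
    (hT : ∀ j, Commute T (S j)) (hT' : ∀ j, Commute T (adjoint (S j)))
    (hβ : equivTail β α) (hγ : equivTail γ α) :
    ⟪e β, T (e γ)⟫_ℂ = ⟪e β, e γ⟫_ℂ * ⟪e β, T (e β)⟫_ℂ := by
  have hP : ∀ n, ⟪e β, T (e γ)⟫_ℂ =
      ⟪e β, T (sWord S (prefixList β n) (adjoint (sWord S (prefixList β n)) (e γ)))⟫_ℂ := by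
    intro n
    set W := sWord S (prefixList β n)
    have hW : ∀ x, T (W x) = W (T x) := DFunLike.congr_fun (commute_sWord hT _).eq
    have hW' : ∀ x, T (adjoint W x) = adjoint W (T x) :=
      DFunLike.congr_fun (commute_star_sWord hT' _).eq
    calc ⟪e β, T (e γ)⟫_ℂ = ⟪W (adjoint W (e β)), T (e γ)⟫_ℂ := by
          rw [hS.adjoint_sWord_prefixList_apply_self hβ, hS.sWord_prefixList_apply hβ]
      _ = ⟪e β, T (W (adjoint W (e γ)))⟫_ℂ := by
          rw [← adjoint_inner_right, ← hW', adjoint_inner_left, hW]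
  have hlim : Tendsto (fun n => ⟪e β, T (sWord S (prefixList β n)
      (adjoint (sWord S (prefixList β n)) (e γ)))⟫_ℂ) atTop (𝓝 ⟪e β, T (⟪e β, e γ⟫_ℂ • e β)⟫_ℂ) :=
    tendsto_const_nhds.inner
      ((T.continuous.tendsto _).comp (hS.tendsto_sWord_adjoint_apply hlt he hβ hγ))
  simp only [← hP] at hlim
  rw [tendsto_nhds_unique tendsto_const_nhds hlim, map_smul, inner_smul_right]

theorem IsRepOps.apply_e_eq_inner_smul (hlt : ∀ i j, i ≠ j → ‖q i j‖ < 1)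
    (he : IsRepSpace q α e) (hS : IsRepOps q α e S) {C : H →L[ℂ] H}
    (hC : ∀ j, Commute C (S j)) (hC' : ∀ j, Commute C (adjoint (S j))) (hβ : equivTail β α) :
    C (e β) = ⟪e β, C (e β)⟫_ℂ • e β := by
  have hCS : ∀ j, Commute (adjoint C) (S j) := fun j => by
    simpa [star_eq_adjoint] using (hC' j).star_star
  have hCS' : ∀ j, Commute (adjoint C) (adjoint (S j)) := fun j => by
    simpa [star_eq_adjoint] using (hC j).star_star
  rw [← sub_eq_zero]
  refine he.eq_zero_of_inner fun γ hγ => ?_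
  have h := hS.inner_e_apply_eq_mul hlt he hCS hCS' hβ hγ
  rw [adjoint_inner_right, adjoint_inner_right] at h
  rw [inner_sub_left, inner_smul_left, inner_conj_symm, h, mul_comm, sub_self]

end Irreducibility

theorem statement9_general {d : ℕ} (q : Fin d → Fin d → ℂ)
    (hlt : ∀ i j : Fin d, i ≠ j → ‖q i j‖ < 1)
    (α : ℕ → Fin d) (e : (ℕ → Fin d) → H) (S : Fin d → H →L[ℂ] H)
    (he : IsRepSpace q α e) (hS : IsRepOps q α e S)
    (C : H →L[ℂ] H)
    (hC : ∀ j : Fin d, C ∘L S j = S j ∘L C)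
    (hC' : ∀ j : Fin d, C ∘L ContinuousLinearMap.adjoint (S j)
      = ContinuousLinearMap.adjoint (S j) ∘L C) :
    ∃ c : ℂ, C = c • (1 : H →L[ℂ] H) := by
  have hCS : ∀ j, Commute C (S j) := hC
  have hCS' : ∀ j, Commute C (adjoint (S j)) := hC'
  obtain ⟨c, hα⟩ : ∃ c : ℂ, C (e α) = c • e α :=
    ⟨_, hS.apply_e_eq_inner_smul hlt he hCS hCS' (equivTail_refl α)⟩
  refine ⟨c, he.ext fun γ hγ => ?_⟩
  obtain ⟨w, w', hw⟩ := hS.exists_eq_sWord_adjoint_sWord hγ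
  have hCw : C (sWord S w (adjoint (sWord S w') (e α))) =
      sWord S w (adjoint (sWord S w') (C (e α))) :=
    DFunLike.congr_fun ((commute_sWord hCS w).mul_right (commute_star_sWord hCS' w')).eq _
  rw [hw, hCw, hα, map_smul, map_smul, _root_.smul_apply, one_apply_eq_self]

theorem statement9 {d : ℕ} (hd : 2 ≤ d) (q : Fin d → Fin d → ℂ)
    (hsym : ∀ i j : Fin d, i ≠ j → q i j = (starRingEnd ℂ) (q j i))
    (hlt : ∀ i j : Fin d, i ≠ j → ‖q i j‖ < 1)
    (α : ℕ → Fin d) (e : (ℕ → Fin d) → H) (S : Fin d → H →L[ℂ] H)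
    (he : IsRepSpace q α e) (hS : IsRepOps q α e S)
    (C : H →L[ℂ] H)
    (hC : ∀ j : Fin d, C ∘L S j = S j ∘L C)
    (hC' : ∀ j : Fin d, C ∘L ContinuousLinearMap.adjoint (S j)
      = ContinuousLinearMap.adjoint (S j) ∘L C) :
    ∃ c : ℂ, C = c • (1 : H →L[ℂ] H) :=
  statement9_general q hlt α e S he hS C hC hC'

end QCstar
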